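/- Let L be the (unsigned) graph Laplacian of G, with eigenvalues λ_1 ≤ … ≤ λ_{|V|} counted with multiplicity. Then: (1) for every ν-partition P̃ of G and every α ∈ ℝ^{∂P̃} with all entries positive, λ_ν ≤ Λ(P̃, α); (2) if ψ is a non-degenerate eigenvector of L with eigenvalue λ_ν having exactly ν nodal domains (Courant-sharp), and P is its nodal partition, then there exists α^c ∈ ℝ^{∂P} with all entries positive such that Λ(P, α^c) = λ_ν; hence the nodal partition of a Courant-sharp Laplacian eigenvector is a globally minimal ν-partition. -/

import Mathlib

/-!
On a boundary edge `{i, j}` the sign flip of `L^{∂P}` and the correction `w_ij B_ij(α)` add up to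
`w_ij α⁻¹ (α e_i + e_j)(α e_i + e_j)ᵀ`, a positive semidefinite rank-one matrix. So `L^{∂P}(P, α)`
dominates `L` as a quadratic form, and it is block diagonal along `P`. The first eigenvectors of
the `ν` blocks, extended by zero, span a `ν`-dimensional space on which the Rayleigh quotient of
`L` is at most `Λ(P, α)`, and the min-max principle gives `λ_ν ≤ Λ(P, α)`.

For the nodal partition of `ψ`, the choice `α_ij = -ψ_j / ψ_i` is positive because `ψ` changes
sign across the boundary, and it puts `ψ` in the kernel of every rank-one correction, so `ψ` is an
eigenvector of `L^{∂P}(P, α)` for `λ_ν`. Inside a nodal domain `ψ` has constant sign while the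
off-diagonal entries are `-w_ij ≤ 0`, so by the ground state transform the restriction of `ψ` is
a ground state of its block: every `λ₁(G_k, α)` equals `λ_ν`.
-/

open Matrix Finset

noncomputable section

variable {V : Type*}

/-- The signed Laplacian of the weighted graph `(G,w)` with signature `σ`. -/
def signedLaplacian [Fintype V] [DecidableEq V] (G : SimpleGraph V) [DecidableRel G.Adj]
    (w σ : V → V → ℝ) : Matrix V V ℝ :=
  Matrix.of fun i j =>
    if i = j then ∑ k, if G.Adj i k then w i k else 0
    else if G.Adj i j then -(σ i j * w i j) else 0

/-- The `n`-th smallest eigenvalue (1-based, counted with multiplicity) of a real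
symmetric matrix; junk value `0` if the matrix is not Hermitian or `n` is out of range. -/
def nthEigenvalue [Fintype V] [DecidableEq V] (A : Matrix V V ℝ) (n : ℕ) : ℝ :=
  if h : A.IsHermitian ∧ n - 1 < Fintype.card V then
    let f : Fin (Fintype.card V) → ℝ := fun i => h.1.eigenvalues ((Fintype.equivFin V).symm i)
    f (Tuple.sort f ⟨n - 1, h.2⟩)
  else 0

/-- `μ` is a simple eigenvalue of `A`: its eigenspace is one-dimensional. -/
def IsSimpleEigenvalue [Fintype V] [DecidableEq V] (A : Matrix V V ℝ) (μ : ℝ) : Prop :=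
  Module.finrank ℝ (Module.End.eigenspace (Matrix.toLin' A) μ) = 1

/-- The nodal set of `u` with respect to the signature `σ`, as a set of (unordered) edges. -/
def nodalEdges (G : SimpleGraph V) (σ : V → V → ℝ) (u : V → ℝ) : Set (Sym2 V) :=
  {e | ∃ i j, e = s(i, j) ∧ G.Adj i j ∧ u i * σ i j * u j < 0}

/-- The number of nodal domains of `u` on `(G,σ)`: the number of connected components
of the spanning subgraph obtained by deleting the nodal set. -/
def nodalCount (G : SimpleGraph V) (σ : V → V → ℝ) (u : V → ℝ) : ℕ :=
  Nat.card (G.deleteEdges (nodalEdges G σ u)).ConnectedComponent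

/-- `(G,σ)` is balanced: every cycle has positive sign. -/
def IsBalanced (G : SimpleGraph V) (σ : V → V → ℝ) : Prop :=
  ∀ ⦃v : V⦄ (p : G.Walk v v), p.IsCycle →
    0 < (p.darts.map fun d => σ d.toProd.1 d.toProd.2).prod

/-- The matrix `B_{ij}(a)`. -/
def Bmat [DecidableEq V] (i j : V) (a : ℝ) : Matrix V V ℝ :=
  Matrix.of fun x y =>
    if x = i ∧ y = i then a
    else if x = j ∧ y = j then a⁻¹
    else if (x = i ∧ y = j) ∨ (x = j ∧ y = i) then -1
    else 0

/-- The signature `σ^{∂P}` determined by the partition `P`. -/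
def partSgn {ν : ℕ} (P : V → Fin ν) (i j : V) : ℝ :=
  if P i = P j then 1 else -1

/-- `L^{∂P}(P,α)`: the partition Laplacian perturbed by the rank-one parameter matrices
on the oriented boundary edges `O`. -/
def paramMatrix [Fintype V] [DecidableEq V] (G : SimpleGraph V) [DecidableRel G.Adj]
    (w : V → V → ℝ) {ν : ℕ} (P : V → Fin ν) (O : Finset (V × V)) (α : V × V → ℝ) :
    Matrix V V ℝ :=
  signedLaplacian G w (partSgn P) + ∑ p ∈ O, w p.1 p.2 • Bmat p.1 p.2 (α p)

/-- The principal submatrix of `M` on the `k`-th part of the partition `P`. -/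
def blockMatrix {ν : ℕ} (M : Matrix V V ℝ) (P : V → Fin ν) (k : Fin ν) :
    Matrix {v : V // P v = k} {v : V // P v = k} ℝ :=
  M.submatrix Subtype.val Subtype.val

/-- `λ₁(G_k, α)`: the smallest eigenvalue of the block of `L^{∂P}(P,α)` on part `k`. -/
def lam1Block [Fintype V] [DecidableEq V] {ν : ℕ} (M : Matrix V V ℝ) (P : V → Fin ν)
    (k : Fin ν) : ℝ :=
  nthEigenvalue (blockMatrix M P k) 1

/-- The partition energy `Λ(P, α) = max_k λ₁(G_k, α)`. -/
def PartitionEnergy [Fintype V] [DecidableEq V] (G : SimpleGraph V) [DecidableRel G.Adj]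
    (w : V → V → ℝ) {ν : ℕ} (P : V → Fin ν) (O : Finset (V × V)) (α : V × V → ℝ) : ℝ :=
  ⨆ k : Fin ν, lam1Block (paramMatrix G w P O α) P k

/-- `(P, α)` is an equipartition: all the first block eigenvalues agree. -/
def IsEquipartition [Fintype V] [DecidableEq V] (G : SimpleGraph V) [DecidableRel G.Adj]
    (w : V → V → ℝ) {ν : ℕ} (P : V → Fin ν) (O : Finset (V × V)) (α : V × V → ℝ) : Prop :=
  ∀ k l : Fin ν, lam1Block (paramMatrix G w P O α) P k = lam1Block (paramMatrix G w P O α) P l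

lemma dotProduct_self_pos [Fintype V] {x : V → ℝ} (hx : x ≠ 0) : 0 < x ⬝ᵥ x :=
  (sum_nonneg fun v _ => mul_self_nonneg (x v)).lt_of_ne
    (Ne.symm (dotProduct_self_eq_zero.not.mpr hx))

namespace Matrix.IsHermitian

variable [Fintype V] [DecidableEq V] {A : Matrix V V ℝ}

lemma sum_dotProduct_eigenvector_mul (hA : A.IsHermitian) (x y : V → ℝ) :
    ∑ v, (hA.eigenvectorBasis v ⬝ᵥ x) * (hA.eigenvectorBasis v ⬝ᵥ y) = x ⬝ᵥ y := by
  have := hA.eigenvectorBasis.sum_inner_mul_inner (WithLp.toLp 2 x) (WithLp.toLp 2 y)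
  simp only [EuclideanSpace.inner_eq_star_dotProduct, star_trivial] at this
  simpa [dotProduct_comm] using this

lemma dotProduct_mulVec_eigenvector (hA : A.IsHermitian) (x : V → ℝ) (v : V) :
    hA.eigenvectorBasis v ⬝ᵥ A *ᵥ x =
      hA.eigenvalues v * (hA.eigenvectorBasis v ⬝ᵥ x) := by
  have hT : Aᵀ = A := by simpa using hA.eq
  rw [dotProduct_mulVec, ← mulVec_transpose, hT, hA.mulVec_eigenvectorBasis, smul_dotProduct,
    smul_eq_mul]

lemma dotProduct_self_eq_sum (hA : A.IsHermitian) (x : V → ℝ) :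
    x ⬝ᵥ x = ∑ v, (hA.eigenvectorBasis v ⬝ᵥ x) ^ 2 := by
  simp_rw [sq, hA.sum_dotProduct_eigenvector_mul]

lemma dotProduct_mulVec_eq_sum (hA : A.IsHermitian) (x : V → ℝ) :
    x ⬝ᵥ A *ᵥ x = ∑ v, hA.eigenvalues v * (hA.eigenvectorBasis v ⬝ᵥ x) ^ 2 := by
  rw [← hA.sum_dotProduct_eigenvector_mul]
  refine sum_congr rfl fun v _ => ?_
  rw [hA.dotProduct_mulVec_eigenvector]
  ring

lemma exists_equiv_monotone_eigenvalues (hA : A.IsHermitian) :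
    ∃ e : Fin (Fintype.card V) ≃ V, Monotone (hA.eigenvalues ∘ e) ∧
      ∀ n (hn : n - 1 < Fintype.card V),
        nthEigenvalue A n = hA.eigenvalues (e ⟨n - 1, hn⟩) := by
  set f : Fin (Fintype.card V) → ℝ := hA.eigenvalues ∘ (Fintype.equivFin V).symm
  refine ⟨(Tuple.sort f).trans (Fintype.equivFin V).symm, Tuple.monotone_sort f, fun n hn => ?_⟩
  rw [nthEigenvalue, dif_pos ⟨hA, hn⟩]
  rfl

lemma nthEigenvalue_one_le (hA : A.IsHermitian) [Nonempty V] (v : V) :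
    nthEigenvalue A 1 ≤ hA.eigenvalues v := by
  obtain ⟨e, he, hev⟩ := hA.exists_equiv_monotone_eigenvalues
  rw [hev 1 Fintype.card_pos, ← e.apply_symm_apply v]
  exact he (Fin.zero_le _)

lemma exists_eigenvalues_eq_nthEigenvalue_one (hA : A.IsHermitian) [Nonempty V] :
    ∃ v, hA.eigenvalues v = nthEigenvalue A 1 := by
  obtain ⟨e, -, hev⟩ := hA.exists_equiv_monotone_eigenvalues
  exact ⟨_, (hev 1 Fintype.card_pos).symm⟩

lemma card_eigenvalues_lt_nthEigenvalue_le (hA : A.IsHermitian) {n : ℕ}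
    (hn : n - 1 < Fintype.card V) : #{v | hA.eigenvalues v < nthEigenvalue A n} ≤ n - 1 := by
  obtain ⟨e, he, hev⟩ := hA.exists_equiv_monotone_eigenvalues
  calc #{v | hA.eigenvalues v < nthEigenvalue A n}
      ≤ #(Iio (⟨n - 1, hn⟩ : Fin (Fintype.card V))) := by
        refine card_le_card_of_injOn e.symm (fun v hv => ?_) e.symm.injective.injOn
        simp only [coe_filter, mem_univ, true_and, Set.mem_ofPred_eq, hev n hn] at hv
        simp only [coe_Iio, Set.mem_Iio]
        by_contra! hle
        have := he hle
        simp only [Function.comp_apply, Equiv.apply_symm_apply] at this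
        linarith
    _ = n - 1 := Fin.card_Iio _

lemma mul_dotProduct_lt_of_forall_eigenvalues_le (hA : A.IsHermitian) {x : V → ℝ}
    (hx : x ≠ 0) {Λ : ℝ} (hxΛ : ∀ v, hA.eigenvalues v ≤ Λ → hA.eigenvectorBasis v ⬝ᵥ x = 0) :
    Λ * (x ⬝ᵥ x) < x ⬝ᵥ A *ᵥ x := by
  obtain ⟨v, hv⟩ : ∃ v, hA.eigenvectorBasis v ⬝ᵥ x ≠ 0 := by
    by_contra! h
    exact hx (dotProduct_self_eq_zero.mp (by simp [hA.dotProduct_self_eq_sum, h]))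
  have hΛv : Λ < hA.eigenvalues v := lt_of_not_ge fun h => hv (hxΛ v h)
  rw [hA.dotProduct_self_eq_sum, hA.dotProduct_mulVec_eq_sum, mul_sum]
  refine sum_lt_sum (fun u _ => ?_) ⟨v, mem_univ v, by gcongr⟩
  by_cases hu : hA.eigenvalues u ≤ Λ
  · simp [hxΛ u hu]
  · exact mul_le_mul_of_nonneg_right (not_le.mp hu).le (sq_nonneg _)

-- The easy half of the Courant–Fischer min-max principle.
theorem nthEigenvalue_le_of_forall_mem (hA : A.IsHermitian) {W : Submodule ℝ (V → ℝ)}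
    {n : ℕ} (hn : 0 < n) (hW : n ≤ Module.finrank ℝ W) {Λ : ℝ}
    (hΛ : ∀ x ∈ W, x ⬝ᵥ A *ᵥ x ≤ Λ * (x ⬝ᵥ x)) : nthEigenvalue A n ≤ Λ := by
  by_contra! hlt
  have hn' : n - 1 < Fintype.card V := by
    have := W.finrank_le
    rw [Module.finrank_fintype_fun_eq_card] at this
    omega
  set S : Finset V := {v | hA.eigenvalues v ≤ Λ}
  have hS : #S ≤ n - 1 := le_trans (card_le_card fun v hv => by
    simp only [S, mem_filter, mem_univ, true_and] at hv ⊢; linarith)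
    (hA.card_eigenvalues_lt_nthEigenvalue_le hn')
  let T : W →ₗ[ℝ] S → ℝ :=
    (of fun (s : S) v => hA.eigenvectorBasis s v).mulVecLin ∘ₗ W.subtype
  have hker : LinearMap.ker T ≠ ⊥ := LinearMap.ker_ne_bot_of_finrank_lt <| by
    rw [Module.finrank_fintype_fun_eq_card, Fintype.card_coe]; omega
  obtain ⟨⟨x, hxW⟩, hxT, hx0⟩ := Submodule.exists_mem_ne_zero_of_ne_bot hker
  refine (hΛ x hxW).not_gt (hA.mul_dotProduct_lt_of_forall_eigenvalues_le (by simpa using hx0)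
    fun v hv => congrFun hxT ⟨v, by simpa [S] using hv⟩)

lemma nthEigenvalue_one_mul_le (hA : A.IsHermitian) [Nonempty V] (x : V → ℝ) :
    nthEigenvalue A 1 * (x ⬝ᵥ x) ≤ x ⬝ᵥ A *ᵥ x := by
  rw [hA.dotProduct_self_eq_sum, hA.dotProduct_mulVec_eq_sum, mul_sum]
  exact sum_le_sum fun v _ => mul_le_mul_of_nonneg_right (hA.nthEigenvalue_one_le v) (sq_nonneg _)

lemma exists_mulVec_eq_nthEigenvalue_one (hA : A.IsHermitian) [Nonempty V] :
    ∃ u ≠ 0, A *ᵥ u = nthEigenvalue A 1 • u := by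
  obtain ⟨v, hv⟩ := hA.exists_eigenvalues_eq_nthEigenvalue_one
  refine ⟨hA.eigenvectorBasis v, ?_, hv ▸ hA.mulVec_eigenvectorBasis v⟩
  simpa using hA.eigenvectorBasis.orthonormal.ne_zero v

lemma nthEigenvalue_one_eq_of_forall_le (hA : A.IsHermitian) [Nonempty V] {ψ : V → ℝ}
    (hψ : ψ ≠ 0) {μ : ℝ} (heig : A *ᵥ ψ = μ • ψ)
    (hμ : ∀ x, μ * (x ⬝ᵥ x) ≤ x ⬝ᵥ A *ᵥ x) :
    nthEigenvalue A 1 = μ := by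
  obtain ⟨u, hu, hAu⟩ := hA.exists_mulVec_eq_nthEigenvalue_one
  refine le_antisymm ?_ ?_
  · have := hA.nthEigenvalue_one_mul_le ψ
    rw [heig, dotProduct_smul, smul_eq_mul] at this
    exact le_of_mul_le_mul_right this (dotProduct_self_pos hψ)
  · have := hμ u
    rw [hAu, dotProduct_smul, smul_eq_mul] at this
    exact le_of_mul_le_mul_right this (dotProduct_self_pos hu)

end Matrix.IsHermitian

lemma linearIndependent_of_support_subset_fiber {K ι : Type*} [Field K] {Φ : ι → V → K}
    {P : V → ι} (hsupp : ∀ k v, Φ k v ≠ 0 → P v = k) (hne : ∀ k, Φ k ≠ 0) :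
    LinearIndependent K Φ := by
  classical
  refine linearIndependent_iff'.mpr fun s g hg k hk => ?_
  obtain ⟨v, hv⟩ : ∃ v, Φ k v ≠ 0 := Function.ne_iff.mp (hne k)
  have hgv := congrFun hg v
  rw [Finset.sum_apply, sum_eq_single_of_mem k hk fun l _ hlk => ?_] at hgv
  · simpa [hv] using hgv
  · have : Φ l v = 0 := by
      by_contra h
      exact hlk ((hsupp l v h).symm.trans (hsupp k v hv))
    simp [this]

lemma dotProduct_extend_zero {p : V → Prop} [Fintype V] [DecidablePred p] (f : V → ℝ)
    (u : Subtype p → ℝ) :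
    f ⬝ᵥ Subtype.val.extend u 0 = (fun s : Subtype p => f s) ⬝ᵥ u := by
  rw [dotProduct, ← Fintype.sum_subtype_add_sum_subtype p]
  have hout : ∀ s : {v // ¬ p v}, Subtype.val.extend u 0 s.val = 0 := fun s =>
    Function.extend_apply' _ _ _ fun ⟨t, ht⟩ => s.2 (ht ▸ t.2)
  simp [hout, dotProduct]

section GroundState

variable {ι : Type*} [Fintype ι] {A : Matrix ι ι ℝ} {ψ : ι → ℝ} {μ : ℝ}

-- The ground state transform (discrete Picone identity).
lemma two_mul_sub_eq_sum_sq (hA : A.IsSymm) (heig : A *ᵥ ψ = μ • ψ) (y : ι → ℝ) :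
    2 * ((ψ * y) ⬝ᵥ A *ᵥ (ψ * y) - μ * ((ψ * y) ⬝ᵥ (ψ * y))) =
      ∑ i, ∑ j, -(A i j * ψ i * ψ j) * (y i - y j) ^ 2 := by
  have hrow : ∀ i, ∑ j, A i j * ψ j = μ * ψ i := fun i => congrFun heig i
  have hdiag : ∑ i, ∑ j, A i j * ψ i * ψ j * y i ^ 2 = μ * ((ψ * y) ⬝ᵥ (ψ * y)) := by
    simp only [dotProduct, mul_sum, Pi.mul_apply]
    refine sum_congr rfl fun i _ => ?_
    rw [show ∑ j, A i j * ψ i * ψ j * y i ^ 2 = (∑ j, A i j * ψ j) * (ψ i * y i ^ 2) by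
      rw [sum_mul]; exact sum_congr rfl fun j _ => by ring, hrow]
    ring
  have hdiag' : ∑ i, ∑ j, A i j * ψ i * ψ j * y j ^ 2 = μ * ((ψ * y) ⬝ᵥ (ψ * y)) := by
    rw [sum_comm, ← hdiag]
    exact sum_congr rfl fun i _ => sum_congr rfl fun j _ => by rw [hA.apply]; ring
  have hcross :
      ∑ i, ∑ j, A i j * ψ i * ψ j * (y i * y j) = (ψ * y) ⬝ᵥ A *ᵥ (ψ * y) := by
    simp only [dotProduct, mulVec, mul_sum, Pi.mul_apply]
    exact sum_congr rfl fun i _ => sum_congr rfl fun j _ => by ring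
  have hexpand : ∀ i j, -(A i j * ψ i * ψ j) * (y i - y j) ^ 2 =
      2 * (A i j * ψ i * ψ j * (y i * y j)) - A i j * ψ i * ψ j * y i ^ 2
        - A i j * ψ i * ψ j * y j ^ 2 := fun i j => by ring
  simp_rw [hexpand, sum_sub_distrib, ← mul_sum]
  rw [hdiag, hdiag', hcross]
  ring

lemma mul_dotProduct_le_of_mulVec_eq (hA : A.IsSymm) (hψ : ∀ i, ψ i ≠ 0)
    (heig : A *ᵥ ψ = μ • ψ) (hoff : ∀ i j, i ≠ j → A i j * ψ i * ψ j ≤ 0)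
    (x : ι → ℝ) :
    μ * (x ⬝ᵥ x) ≤ x ⬝ᵥ A *ᵥ x := by
  have hx : ψ * (x / ψ) = x := funext fun i => mul_div_cancel₀ (x i) (hψ i)
  have hnonneg : 0 ≤ ∑ i, ∑ j, -(A i j * ψ i * ψ j) * ((x / ψ) i - (x / ψ) j) ^ 2 := by
    refine sum_nonneg fun i _ => sum_nonneg fun j _ => ?_
    by_cases hij : i = j
    · simp [hij]
    · exact mul_nonneg (neg_nonneg.mpr (hoff i j hij)) (sq_nonneg _)
  have := two_mul_sub_eq_sum_sq hA heig (x / ψ)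
  rw [hx] at this
  linarith

end GroundState

section Block

variable [Fintype V] {ν : ℕ} {M : Matrix V V ℝ} {P : V → Fin ν}

lemma blockMatrix_mulVec (hM : ∀ i j, P i ≠ P j → M i j = 0) (k : Fin ν) (x : V → ℝ) :
    blockMatrix M P k *ᵥ (fun s : {v // P v = k} => x s) =
      fun s : {v // P v = k} => (M *ᵥ x) s := by
  funext s
  simp only [mulVec, dotProduct, ← Fintype.sum_subtype_add_sum_subtype (fun v => P v = k)]
  have hout : ∀ t : {v // ¬ P v = k}, M s t * x t = 0 := fun t => by
    rw [hM s t (s.2.trans_ne (Ne.symm t.2)), zero_mul]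
  simp [hout, blockMatrix]

lemma mulVec_extend_zero (hM : ∀ i j, P i ≠ P j → M i j = 0) (k : Fin ν)
    (u : {v // P v = k} → ℝ) :
    M *ᵥ Subtype.val.extend u 0 = Subtype.val.extend (blockMatrix M P k *ᵥ u) 0 := by
  funext i
  rw [mulVec, dotProduct_extend_zero]
  by_cases hi : P i = k
  · lift i to {v // P v = k} using hi
    rw [Subtype.val_injective.extend_apply]
    rfl
  · rw [Function.extend_apply' _ _ _ fun ⟨t, ht⟩ => hi (ht ▸ t.2)]
    exact sum_eq_zero fun t _ => by simp [hM i t fun h => hi (h.trans t.2)]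

-- The first eigenvectors of the blocks, extended by zero, are `ν` independent vectors on
-- which `M` acts as the diagonal matrix of the block eigenvalues.
lemma le_finrank_ker_sub_diagonal_lam1Block [DecidableEq V] (hM : M.IsHermitian)
    (hblock : ∀ i j, P i ≠ P j → M i j = 0) (hP : Function.Surjective P) :
    ν ≤ Module.finrank ℝ
      (LinearMap.ker (M - diagonal fun v => lam1Block M P (P v)).mulVecLin) := by
  choose u hu0 hu using fun k =>
    have : Nonempty {v // P v = k} := ⟨⟨_, (hP k).choose_spec⟩⟩
    (hM.submatrix Subtype.val).exists_mulVec_eq_nthEigenvalue_one (A := blockMatrix M P k)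
  replace hu : ∀ k, blockMatrix M P k *ᵥ u k = lam1Block M P k • u k := hu
  let Φ k : V → ℝ := Subtype.val.extend (u k) 0
  have hsupp : ∀ k v, Φ k v ≠ 0 → P v = k := fun k v hv => by
    by_contra h
    exact hv (Function.extend_apply' _ _ _ fun ⟨t, ht⟩ => h (ht ▸ t.2))
  have hΦ0 : ∀ k, Φ k ≠ 0 := fun k hk => hu0 k <| funext fun s => by
    simpa [Φ, Subtype.val_injective.extend_apply] using congrFun hk s
  have hspan : Submodule.span ℝ (Set.range Φ) ≤
      LinearMap.ker (M - diagonal fun v => lam1Block M P (P v)).mulVecLin := by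
    refine Submodule.span_le.mpr (Set.range_subset_iff.mpr fun k => ?_)
    have hMΦ : M *ᵥ Φ k = lam1Block M P k • Φ k := by
      rw [mulVec_extend_zero hblock, hu, ← Function.extend_smul, smul_zero]
    funext v
    by_cases hv : Φ k v = 0
    · simp [mulVec_diagonal, hMΦ, hv]
    · simp [mulVec_diagonal, hMΦ, hsupp k v hv]
  have := Submodule.finrank_mono hspan
  rwa [finrank_span_eq_card (linearIndependent_of_support_subset_fiber hsupp hΦ0),
    Fintype.card_fin] at this

theorem nthEigenvalue_le_iSup_lam1Block [DecidableEq V] [Nonempty V] {L : Matrix V V ℝ}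
    (hL : L.IsHermitian) (hM : M.IsHermitian) (hblock : ∀ i j, P i ≠ P j → M i j = 0)
    (hP : Function.Surjective P) (hLM : ∀ x, x ⬝ᵥ L *ᵥ x ≤ x ⬝ᵥ M *ᵥ x) :
    nthEigenvalue L ν ≤ ⨆ k, lam1Block M P k := by
  set Λ := ⨆ k, lam1Block M P k
  have hΛ : ∀ k, lam1Block M P k ≤ Λ := le_ciSup (Set.finite_range _).bddAbove
  refine hL.nthEigenvalue_le_of_forall_mem (P (Classical.arbitrary V)).pos
    (le_finrank_ker_sub_diagonal_lam1Block hM hblock hP) fun x hx => ?_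
  have hMx : M *ᵥ x = fun v => lam1Block M P (P v) * x v := by
    rw [LinearMap.mem_ker, mulVecLin_apply, sub_mulVec, sub_eq_zero] at hx
    exact hx.trans (funext fun v => mulVec_diagonal _ _ v)
  calc x ⬝ᵥ L *ᵥ x ≤ x ⬝ᵥ M *ᵥ x := hLM x
    _ = ∑ v, lam1Block M P (P v) * (x v * x v) := by
      simp only [hMx, dotProduct]
      exact sum_congr rfl fun v _ => by ring
    _ ≤ ∑ v, Λ * (x v * x v) :=
      sum_le_sum fun v _ => mul_le_mul_of_nonneg_right (hΛ _) (mul_self_nonneg _)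
    _ = Λ * (x ⬝ᵥ x) := by rw [dotProduct, mul_sum]

theorem lam1Block_eq_of_mulVec_eq [DecidableEq V] (hM : M.IsHermitian)
    (hblock : ∀ i j, P i ≠ P j → M i j = 0) (hP : Function.Surjective P) {ψ : V → ℝ}
    (hψ : ∀ v, ψ v ≠ 0) {μ : ℝ} (heig : M *ᵥ ψ = μ • ψ)
    (hoff : ∀ i j, i ≠ j → P i = P j → M i j * ψ i * ψ j ≤ 0) (k : Fin ν) :
    lam1Block M P k = μ := by
  have : Nonempty {v // P v = k} := ⟨⟨_, (hP k).choose_spec⟩⟩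
  have hB : (blockMatrix M P k).IsHermitian := hM.submatrix Subtype.val
  let ψk : {v // P v = k} → ℝ := fun s => ψ s
  have heigk : blockMatrix M P k *ᵥ ψk = μ • ψk := by
    rw [blockMatrix_mulVec hblock, heig]
    rfl
  refine hB.nthEigenvalue_one_eq_of_forall_le (Function.ne_iff.mpr ?_) heigk
    (mul_dotProduct_le_of_mulVec_eq (isHermitian_iff_isSymm.mp hB) (fun s => hψ s) heigk
      fun s t hst => hoff s t (Subtype.val_injective.ne hst) (s.2.trans t.2.symm))
  obtain ⟨v⟩ := this
  exact ⟨v, hψ v⟩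

end Block

section PartitionLaplacian

variable [DecidableEq V] (G : SimpleGraph V) [DecidableRel G.Adj] (w : V → V → ℝ)
  {ν : ℕ} (P : V → Fin ν)

structure IsBoundaryOrientation (O : Finset (V × V)) : Prop where
  subset : ∀ p ∈ O, G.Adj p.1 p.2 ∧ P p.1 ≠ P p.2
  orient : ∀ i j, G.Adj i j → P i ≠ P j → ((i, j) ∈ O ↔ (j, i) ∉ O)

def edgeIndicator (i j : V) : Matrix V V ℝ := single i j 1 + single j i 1

def boundaryWeights : Matrix V V ℝ :=
  of fun i j => if G.Adj i j ∧ P i ≠ P j then w i j else 0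

-- `a⁻¹ (a eᵢ + eⱼ)(a eᵢ + eⱼ)ᵀ`, that is, `Bmat i j a + 2 • edgeIndicator i j` for `i ≠ j`.
def edgeMatrix (i j : V) (a : ℝ) : Matrix V V ℝ :=
  diagonal (Pi.single i a + Pi.single j a⁻¹) + edgeIndicator i j

variable {G w P}

lemma Bmat_eq_diagonal_sub_edgeIndicator {i j : V} (hij : i ≠ j) (a : ℝ) :
    Bmat i j a = diagonal (Pi.single i a + Pi.single j a⁻¹) - edgeIndicator i j := by
  ext x y
  simp only [Bmat, edgeIndicator, of_apply, Matrix.sub_apply, Matrix.add_apply, diagonal_apply,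
    single, Pi.add_apply, Pi.single_apply]
  split_ifs <;> grind

lemma sum_smul_edgeIndicator {O : Finset (V × V)} (hO : IsBoundaryOrientation G P O)
    (hw : ∀ i j, w i j = w j i) :
    ∑ p ∈ O, w p.1 p.2 • edgeIndicator p.1 p.2 = boundaryWeights G w P := by
  ext x y
  have hsingle : ∀ (p : V × V) (a b : V),
      single p.1 p.2 (1 : ℝ) a b = if p = (a, b) then 1 else 0 :=
    fun p a b => by simp [single, Prod.ext_iff]
  have hsingle' : ∀ (p : V × V) (a b : V),
      single p.2 p.1 (1 : ℝ) a b = if p = (b, a) then 1 else 0 :=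
    fun p a b => by simp [single, Prod.ext_iff, and_comm]
  simp only [Matrix.sum_apply, Matrix.smul_apply, edgeIndicator, Matrix.add_apply, hsingle,
    hsingle', smul_eq_mul, mul_add, sum_add_distrib, mul_ite, mul_one, mul_zero, sum_ite_eq',
    boundaryWeights, of_apply]
  have hxy := hO.subset (x, y)
  have hyx := hO.subset (y, x)
  have horient := hO.orient x y
  rw [hw y x]
  split_ifs <;> grind [G.adj_symm]

lemma signedLaplacian_isHermitian [Fintype V] {σ : V → V → ℝ} (hw : ∀ i j, w i j = w j i)
    (hσ : ∀ i j, σ i j = σ j i) : (signedLaplacian G w σ).IsHermitian := by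
  refine isHermitian_iff_isSymm.mpr (IsSymm.ext fun i j => ?_)
  simp only [signedLaplacian, of_apply, eq_comm (a := j), hσ j i, hw j i, G.adj_comm j i]
  split_ifs <;> simp_all

lemma signedLaplacian_partSgn [Fintype V] :
    signedLaplacian G w (partSgn P) =
      signedLaplacian G w (fun _ _ => 1) + 2 • boundaryWeights G w P := by
  ext i j
  simp only [signedLaplacian, boundaryWeights, partSgn, Matrix.add_apply, Matrix.smul_apply,
    of_apply]
  split_ifs <;> grind

lemma paramMatrix_eq [Fintype V] {O : Finset (V × V)} (hO : IsBoundaryOrientation G P O)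
    (hw : ∀ i j, w i j = w j i) (α : V × V → ℝ) :
    paramMatrix G w P O α =
      signedLaplacian G w (fun _ _ => 1) +
        ∑ p ∈ O, w p.1 p.2 • edgeMatrix p.1 p.2 (α p) := by
  have hB : ∑ p ∈ O, w p.1 p.2 • Bmat p.1 p.2 (α p) = ∑ p ∈ O, w p.1 p.2 •
      (diagonal (Pi.single p.1 (α p) + Pi.single p.2 (α p)⁻¹) - edgeIndicator p.1 p.2) :=
    sum_congr rfl fun p hp => by rw [Bmat_eq_diagonal_sub_edgeIndicator (hO.subset p hp).1.ne]
  rw [paramMatrix, signedLaplacian_partSgn, hB, ← sum_smul_edgeIndicator hO hw]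
  simp only [edgeMatrix, smul_sub, smul_add, sum_sub_distrib, sum_add_distrib]
  abel

lemma paramMatrix_apply_of_ne [Fintype V] {O : Finset (V × V)}
    (hO : IsBoundaryOrientation G P O) (hw : ∀ i j, w i j = w j i) (α : V × V → ℝ) {x y : V}
    (hxy : x ≠ y) :
    paramMatrix G w P O α x y = if G.Adj x y ∧ P x = P y then -w x y else 0 := by
  have hoff : (∑ p ∈ O, w p.1 p.2 • edgeMatrix p.1 p.2 (α p)) x y =
      (∑ p ∈ O, w p.1 p.2 • edgeIndicator p.1 p.2) x y := by
    simp only [Matrix.sum_apply, Matrix.smul_apply, edgeMatrix, Matrix.add_apply,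
      diagonal_apply_ne _ hxy, zero_add]
  rw [paramMatrix_eq hO hw, Matrix.add_apply, hoff, sum_smul_edgeIndicator hO hw]
  simp only [signedLaplacian, boundaryWeights, of_apply, if_neg hxy]
  split_ifs <;> grind

lemma paramMatrix_isHermitian [Fintype V] {O : Finset (V × V)}
    (hO : IsBoundaryOrientation G P O) (hw : ∀ i j, w i j = w j i) (α : V × V → ℝ) :
    (paramMatrix G w P O α).IsHermitian := by
  refine isHermitian_iff_isSymm.mpr (IsSymm.ext fun i j => ?_)
  rcases eq_or_ne i j with rfl | hij
  · rfl
  simp only [paramMatrix_apply_of_ne hO hw α hij, paramMatrix_apply_of_ne hO hw α hij.symm,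
    hw j i, G.adj_comm j i, eq_comm (a := P j)]

lemma edgeMatrix_mulVec [Fintype V] {i j : V} (hij : i ≠ j) (a : ℝ) (x : V → ℝ) :
    edgeMatrix i j a *ᵥ x = Pi.single i (a * x i + x j) + Pi.single j (a⁻¹ * x j + x i) := by
  funext u
  simp only [edgeMatrix, edgeIndicator, add_mulVec, mulVec_diagonal, single_mulVec,
    Pi.add_apply, Pi.single_apply, Function.update_apply, Pi.zero_apply]
  split_ifs <;> subst_vars <;> first | (exfalso; exact hij rfl) | ring

lemma dotProduct_edgeMatrix_mulVec_nonneg [Fintype V] {i j : V} (hij : i ≠ j) {a : ℝ}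
    (ha : 0 < a) (x : V → ℝ) : 0 ≤ x ⬝ᵥ edgeMatrix i j a *ᵥ x := by
  rw [edgeMatrix_mulVec hij, dotProduct_add, dotProduct_single, dotProduct_single]
  have : x i * (a * x i + x j) + x j * (a⁻¹ * x j + x i) = a⁻¹ * (a * x i + x j) ^ 2 := by
    field_simp
    ring
  rw [this]
  positivity

lemma edgeMatrix_mulVec_eq_zero [Fintype V] {i j : V} (hij : i ≠ j) {ψ : V → ℝ}
    (hi : ψ i ≠ 0) (hj : ψ j ≠ 0) : edgeMatrix i j (-ψ j / ψ i) *ᵥ ψ = 0 := by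
  rw [edgeMatrix_mulVec hij, inv_div]
  field_simp
  simp

end PartitionLaplacian

section NodalDomains

variable {G : SimpleGraph V} {ψ : V → ℝ}

lemma mul_pos_of_reachable_deleteEdges_nodalEdges (hψ : ∀ v, ψ v ≠ 0) {i j : V}
    (h : (G.deleteEdges (nodalEdges G (fun _ _ => 1) ψ)).Reachable i j) : 0 < ψ i * ψ j := by
  obtain ⟨p⟩ := h
  induction p with
  | nil => exact mul_self_pos.mpr (hψ _)
  | @cons a b c hab _ ih =>
    obtain ⟨hadj, hnodal⟩ := SimpleGraph.deleteEdges_adj.mp hab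
    have hab : 0 < ψ a * ψ b := by
      refine (le_of_not_gt fun hlt => hnodal ⟨a, b, rfl, hadj, ?_⟩).lt_of_ne
        (mul_ne_zero (hψ a) (hψ b)).symm
      rwa [mul_one]
    nlinarith [mul_self_pos.mpr (hψ b), mul_pos hab ih]

lemma mul_neg_of_adj_of_not_reachable (hψ : ∀ v, ψ v ≠ 0) {a b : V} (hadj : G.Adj a b)
    (hab : ¬ (G.deleteEdges (nodalEdges G (fun _ _ => 1) ψ)).Reachable a b) :
    ψ a * ψ b < 0 := by
  refine (lt_of_le_of_ne (not_lt.mp fun hpos => hab ?_) (mul_ne_zero (hψ a) (hψ b)))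
  refine (SimpleGraph.deleteEdges_adj.mpr ⟨hadj, ?_⟩).reachable
  rintro ⟨i, j, hs, -, hlt⟩
  rcases Sym2.eq_iff.mp hs with ⟨rfl, rfl⟩ | ⟨rfl, rfl⟩ <;> nlinarith

end NodalDomains

section CourantSharp

variable [Fintype V] [DecidableEq V] {G : SimpleGraph V} [DecidableRel G.Adj]
  {w : V → V → ℝ} {ν : ℕ} {P : V → Fin ν} {O : Finset (V × V)}

lemma paramMatrix_apply_eq_zero (hO : IsBoundaryOrientation G P O) (hw : ∀ i j, w i j = w j i)
    (α : V × V → ℝ) {i j : V} (hij : P i ≠ P j) : paramMatrix G w P O α i j = 0 := by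
  rw [paramMatrix_apply_of_ne hO hw α (ne_of_apply_ne P hij), if_neg fun h => hij h.2]

lemma dotProduct_laplacian_mulVec_le (hO : IsBoundaryOrientation G P O)
    (hw : ∀ i j, w i j = w j i) (hwpos : ∀ i j, G.Adj i j → 0 < w i j) {α : V × V → ℝ}
    (hα : ∀ p ∈ O, 0 < α p) (x : V → ℝ) :
    x ⬝ᵥ signedLaplacian G w (fun _ _ => 1) *ᵥ x ≤
      x ⬝ᵥ paramMatrix G w P O α *ᵥ x := by
  rw [paramMatrix_eq hO hw, add_mulVec, dotProduct_add, le_add_iff_nonneg_right, sum_mulVec,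
    dotProduct_sum]
  refine sum_nonneg fun p hp => ?_
  rw [smul_mulVec, dotProduct_smul, smul_eq_mul]
  exact mul_nonneg (hwpos _ _ (hO.subset p hp).1).le
    (dotProduct_edgeMatrix_mulVec_nonneg (hO.subset p hp).1.ne (hα p hp) x)

theorem nthEigenvalue_laplacian_le_partitionEnergy [Nonempty V] (hw : ∀ i j, w i j = w j i)
    (hwpos : ∀ i j, G.Adj i j → 0 < w i j) (hP : Function.Surjective P)
    (hO : IsBoundaryOrientation G P O) {α : V × V → ℝ} (hα : ∀ p ∈ O, 0 < α p) :
    nthEigenvalue (signedLaplacian G w fun _ _ => 1) ν ≤ PartitionEnergy G w P O α :=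
  nthEigenvalue_le_iSup_lam1Block (signedLaplacian_isHermitian hw fun _ _ => rfl)
    (paramMatrix_isHermitian hO hw α) (fun _ _ => paramMatrix_apply_eq_zero hO hw α) hP
    (dotProduct_laplacian_mulVec_le hO hw hwpos hα)

theorem exists_partitionEnergy_eq_of_nodal [Nonempty V] (hw : ∀ i j, w i j = w j i)
    (hwpos : ∀ i j, G.Adj i j → 0 < w i j) {ψ : V → ℝ} {μ : ℝ}
    (heig : signedLaplacian G w (fun _ _ => 1) *ᵥ ψ = μ • ψ) (hψ : ∀ v, ψ v ≠ 0)
    (hP : Function.Surjective P)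
    (hnodal : ∀ i j, P i = P j ↔ (G.deleteEdges (nodalEdges G (fun _ _ => 1) ψ)).Reachable i j)
    (hO : IsBoundaryOrientation G P O) :
    ∃ α : V × V → ℝ, (∀ p ∈ O, 0 < α p) ∧ PartitionEnergy G w P O α = μ := by
  have hcross : ∀ p ∈ O, ψ p.1 * ψ p.2 < 0 := fun p hp =>
    mul_neg_of_adj_of_not_reachable hψ (hO.subset p hp).1 (mt (hnodal _ _).mpr (hO.subset p hp).2)
  -- `α_{ij} = -ψ_j / ψ_i` is the value that puts `ψ` in the kernel of `edgeMatrix i j α_{ij}`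
  let α : V × V → ℝ := fun p => -ψ p.2 / ψ p.1
  refine ⟨α, fun p hp => ?_, ?_⟩
  · have : α p = -(ψ p.1 * ψ p.2) / ψ p.1 ^ 2 := by
      simp only [α]
      field_simp [hψ p.1]
    rw [this]
    exact div_pos (neg_pos.mpr (hcross p hp)) (sq_pos_of_ne_zero (hψ _))
  have heigM : paramMatrix G w P O α *ᵥ ψ = μ • ψ := by
    rw [paramMatrix_eq hO hw, add_mulVec, sum_mulVec, sum_eq_zero fun p hp => by
      rw [smul_mulVec, edgeMatrix_mulVec_eq_zero (hO.subset p hp).1.ne (hψ _) (hψ _), smul_zero],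
      add_zero, heig]
  have hoff :
      ∀ i j, i ≠ j → P i = P j → paramMatrix G w P O α i j * ψ i * ψ j ≤ 0 := by
    intro i j hij hPij
    rw [paramMatrix_apply_of_ne hO hw α hij]
    split_ifs with h
    · nlinarith [hwpos i j h.1,
        mul_pos_of_reachable_deleteEdges_nodalEdges hψ ((hnodal i j).mp hPij)]
    · simp
  have : Nonempty (Fin ν) := ⟨P (Classical.arbitrary V)⟩
  simp_rw [PartitionEnergy, lam1Block_eq_of_mulVec_eq (paramMatrix_isHermitian hO hw α)
    (fun _ _ => paramMatrix_apply_eq_zero hO hw α) hP hψ heigM hoff, ciSup_const]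

end CourantSharp

theorem stmt18_general [Fintype V] [DecidableEq V] (G : SimpleGraph V) [DecidableRel G.Adj]
    (hGconn : G.Connected) (w : V → V → ℝ)
    (hwsymm : ∀ i j, w i j = w j i) (hwpos : ∀ i j, G.Adj i j → 0 < w i j) :
    (∀ (ν : ℕ) (Pt : V → Fin ν), Function.Surjective Pt →
      (∀ k : Fin ν, (G.induce {v | Pt v = k}).Connected) →
      ∀ O : Finset (V × V), (∀ p ∈ O, G.Adj p.1 p.2 ∧ Pt p.1 ≠ Pt p.2) →
      (∀ i j, G.Adj i j → Pt i ≠ Pt j → ((i, j) ∈ O ↔ (j, i) ∉ O)) →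
      ∀ α : V × V → ℝ, (∀ p ∈ O, 0 < α p) →
        nthEigenvalue (signedLaplacian G w fun _ _ => 1) ν ≤ PartitionEnergy G w Pt O α) ∧
    (∀ (ν : ℕ) (ψ : V → ℝ) (lam : ℝ),
      (signedLaplacian G w fun _ _ => 1).mulVec ψ = lam • ψ →
      (∀ v, ψ v ≠ 0) →
      IsSimpleEigenvalue (signedLaplacian G w fun _ _ => 1) lam →
      lam = nthEigenvalue (signedLaplacian G w fun _ _ => 1) ν →
      nodalCount G (fun _ _ => 1) ψ = ν →
      ∀ P : V → Fin ν, Function.Surjective P →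
      (∀ i j : V, P i = P j ↔
        (G.deleteEdges (nodalEdges G (fun _ _ => 1) ψ)).Reachable i j) →
      ∀ O : Finset (V × V), (∀ p ∈ O, G.Adj p.1 p.2 ∧ P p.1 ≠ P p.2) →
      (∀ i j, G.Adj i j → P i ≠ P j → ((i, j) ∈ O ↔ (j, i) ∉ O)) →
      ∃ αc : V × V → ℝ, (∀ p ∈ O, 0 < αc p) ∧ PartitionEnergy G w P O αc = lam) := by
  have : Nonempty V := hGconn.nonempty
  constructor
  · intro ν P hP _ O hO hOr α hα
    exact nthEigenvalue_laplacian_le_partitionEnergy hwsymm hwpos hP ⟨hO, hOr⟩ hα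
  · intro ν ψ μ heig hψ _ _ _ P hP hnodal O hO hOr
    exact exists_partitionEnergy_eq_of_nodal hwsymm hwpos heig hψ hP hnodal ⟨hO, hOr⟩

/-- Courant-sharp eigenvectors induce globally minimal partitions.
(1) For every `ν`-partition `P̃` of `G` and every positive parameter vector `α`,
`λ_ν ≤ Λ(P̃, α)`, where `λ_ν` is the `ν`-th smallest eigenvalue of the (unsigned) graph
Laplacian `L`. (2) If `ψ` is a non-degenerate eigenvector of `L` with eigenvalue `λ_ν`
having exactly `ν` nodal domains and `P` is its nodal partition, then some positive
parameter vector `α^c` achieves `Λ(P, α^c) = λ_ν`. -/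
theorem stmt18 [Fintype V] [DecidableEq V] (G : SimpleGraph V) [DecidableRel G.Adj]
    (hGconn : G.Connected) (w : V → V → ℝ)
    (hwsymm : ∀ i j, w i j = w j i) (hwpos : ∀ i j, G.Adj i j → 0 < w i j)
    (hw0 : ∀ i j, ¬ G.Adj i j → w i j = 0) :
    (∀ (ν : ℕ) (Pt : V → Fin ν), Function.Surjective Pt →
      (∀ k : Fin ν, (G.induce {v | Pt v = k}).Connected) →
      ∀ O : Finset (V × V), (∀ p ∈ O, G.Adj p.1 p.2 ∧ Pt p.1 ≠ Pt p.2) →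
      (∀ i j, G.Adj i j → Pt i ≠ Pt j → ((i, j) ∈ O ↔ (j, i) ∉ O)) →
      ∀ α : V × V → ℝ, (∀ p ∈ O, 0 < α p) →
        nthEigenvalue (signedLaplacian G w fun _ _ => 1) ν ≤ PartitionEnergy G w Pt O α) ∧
    (∀ (ν : ℕ) (ψ : V → ℝ) (lam : ℝ),
      (signedLaplacian G w fun _ _ => 1).mulVec ψ = lam • ψ →
      (∀ v, ψ v ≠ 0) →
      IsSimpleEigenvalue (signedLaplacian G w fun _ _ => 1) lam →
      lam = nthEigenvalue (signedLaplacian G w fun _ _ => 1) ν →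
      nodalCount G (fun _ _ => 1) ψ = ν →
      ∀ P : V → Fin ν, Function.Surjective P →
      (∀ i j : V, P i = P j ↔
        (G.deleteEdges (nodalEdges G (fun _ _ => 1) ψ)).Reachable i j) →
      ∀ O : Finset (V × V), (∀ p ∈ O, G.Adj p.1 p.2 ∧ P p.1 ≠ P p.2) →
      (∀ i j, G.Adj i j → P i ≠ P j → ((i, j) ∈ O ↔ (j, i) ∉ O)) →
      ∃ αc : V × V → ℝ, (∀ p ∈ O, 0 < αc p) ∧ PartitionEnergy G w P O αc = lam) :=
  stmt18_general G hGconn w hwsymm hwpos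

end
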